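/- Corollary of Theorem 1.3 (Theorem A): The following two sets of polynomial moulds F ∈ ARI coincide: (a) the set of polynomial moulds F such that M := Δ⁻¹F is alternal and push-invariant and there exists a constant mould C = (c_r) with swap M + C circ-neutral, i.e. Σ_{i=0}^{r−1} (circ^i(swap M))(v_1,…,v_r) = −r·c_r for all r ≥ 2 (the defining conditions of the underlying vector space of the elliptic Kashiwara–Vergne Lie algebra krv_ell); and (b) the set of polynomial moulds F such that M := Δ⁻¹F is alternal and push-invariant and there exists a constant mould C = (c_r) with ℱ(dar⁻¹F)(u_1,…,u_r) = −r·c_r·(u_2+⋯+u_r) for all r ≥ 2. Moreover, for a given F the same constant mould C works in (a) and in (b). -/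

import Mathlib

/-!
Moulds over ℚ: a mould is a family `A = (A_r)_{r ≥ 0}` where `A_r` lies in the
field `ℚ(u_1, …, u_r)` of rational functions in `r` commuting variables,
realized here as the fraction field of `MvPolynomial (Fin r) ℚ`.
Substitution of ℚ-linearly independent linear forms is realized by lifting the
corresponding (injective) polynomial substitution map to the fraction fields.
-/

noncomputable section

/-- The polynomial ring `ℚ[u_1, …, u_r]` (variables are 0-indexed). -/
abbrev MPoly (r : ℕ) : Type := MvPolynomial (Fin r) ℚ

/-- The field of rational functions `ℚ(u_1, …, u_r)`. -/
abbrev MFrac (r : ℕ) : Type := FractionRing (MPoly r)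

/-- A mould over ℚ: its depth-`r` part is a rational function of `r` variables;
its depth-`0` part is a constant. -/
abbrev Mould : Type := (r : ℕ) → MFrac r

/-- The canonical embedding of polynomials into rational functions. -/
def toF {r : ℕ} (p : MPoly r) : MFrac r := algebraMap (MPoly r) (MFrac r) p

/-- The constant `q` viewed as a rational function in `r` variables. -/
def constF (r : ℕ) (q : ℚ) : MFrac r := toF (MvPolynomial.C q)

/-- The variable `u_{k+1}` (0-indexed: `X k`), with junk value `0` out of range. -/
def Xn (r k : ℕ) : MPoly r := if h : k < r then MvPolynomial.X ⟨k, h⟩ else 0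

/-- The linear form `u_1 + ⋯ + u_n`. -/
def sumXn (r n : ℕ) : MPoly r := ∑ k ∈ Finset.range n, Xn r k

/-- Substitution `A(ℓ_1, …, ℓ_s)` of a family of polynomials (in applications:
ℚ-linearly independent linear forms in `u_1, …, u_r`) into a rational function
`A ∈ ℚ(u_1,…,u_s)`, obtained by lifting the polynomial substitution map to the
fraction fields; junk value `0` if the substitution map is not injective
(which never occurs for linearly independent linear forms). -/
def msubst {s r : ℕ} (ℓ : Fin s → MPoly r) (A : MFrac s) : MFrac r := by
  classical
  exact if h : Function.Injective ((algebraMap (MPoly r) (MFrac r)).comp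
      (MvPolynomial.aeval (R := ℚ) ℓ).toRingHom)
    then IsFractionRing.lift h A else 0

/-! ### The basic mould operators -/

/-- Arguments of the swap: `(swap A)(v_1,…,v_r) = A(v_r, v_{r-1}-v_r, …, v_1-v_2)`. -/
def swapArgs (r : ℕ) : Fin r → MPoly r := fun m => Xn r (r - 1 - m.val) - Xn r (r - m.val)

/-- The swap of a mould. -/
def swapM (A : Mould) : Mould := fun r => msubst (swapArgs r) (A r)

/-- `(push_u A)(u_1,…,u_r) = A(−u_1−⋯−u_r, u_1,…,u_{r−1})`. -/
def pushArgs (r : ℕ) : Fin r → MPoly r := fun m =>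
  if m.val = 0 then -(sumXn r r) else Xn r (m.val - 1)

def pushU (A : Mould) : Mould := fun r => msubst (pushArgs r) (A r)

/-- `(push_u⁻¹ A)(u_1,…,u_r) = A(u_2,…,u_r, −u_1−⋯−u_r)`. -/
def pushInvArgs (r : ℕ) : Fin r → MPoly r := fun m =>
  if m.val = r - 1 then -(sumXn r r) else Xn r (m.val + 1)

def pushUInv (A : Mould) : Mould := fun r => msubst (pushInvArgs r) (A r)

/-- `(push_v B)(v_1,…,v_r) = B(−v_r, v_1−v_r, …, v_{r−1}−v_r)`. -/
def pushVArgs (r : ℕ) : Fin r → MPoly r := fun m =>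
  if m.val = 0 then -(Xn r (r - 1)) else Xn r (m.val - 1) - Xn r (r - 1)

def pushV (A : Mould) : Mould := fun r => msubst (pushVArgs r) (A r)

/-- `(push_v⁻¹ B)(v_1,…,v_r) = B(v_2−v_1, …, v_r−v_1, −v_1)`. -/
def pushVInvArgs (r : ℕ) : Fin r → MPoly r := fun m =>
  if m.val = r - 1 then -(Xn r 0) else Xn r (m.val + 1) - Xn r 0

def pushVInv (A : Mould) : Mould := fun r => msubst (pushVInvArgs r) (A r)

/-- `(circ B)(v_1,…,v_r) = B(v_2,…,v_r,v_1)`. -/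
def circArgs (r : ℕ) : Fin r → MPoly r := fun m =>
  if m.val = r - 1 then Xn r 0 else Xn r (m.val + 1)

def circM (A : Mould) : Mould := fun r => msubst (circArgs r) (A r)

/-- `(dur A)(u_1,…,u_r) = (u_1+⋯+u_r)·A(u_1,…,u_r)`. -/
def durM (A : Mould) : Mould := fun r => toF (sumXn r r) * A r

/-- `(dar A)(u_1,…,u_r) = u_1⋯u_r·A(u_1,…,u_r)`. -/
def darM (A : Mould) : Mould := fun r => toF (∏ k ∈ Finset.range r, Xn r k) * A r

/-- `(dar⁻¹ A)(u_1,…,u_r) = A(u_1,…,u_r)/(u_1⋯u_r)`. -/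
def darInv (A : Mould) : Mould := fun r => A r / toF (∏ k ∈ Finset.range r, Xn r k)

/-- `Δ = dar ∘ dur`. -/
def deltaM (A : Mould) : Mould := darM (durM A)

/-- `Δ⁻¹`, dividing the depth-`r` part by `u_1⋯u_r·(u_1+⋯+u_r)`. -/
def deltaInv (A : Mould) : Mould := fun r =>
  A r / toF ((∏ k ∈ Finset.range r, Xn r k) * sumXn r r)

/-! ### The Fay operator -/

/-- Arguments of the `i`-th Fay term (`1 ≤ i ≤ r`):
`(u_2,…,u_i, −ū_i, ū_{i+1}, u_{i+2},…,u_r)` for `i < r`, and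
`(u_2,…,u_r, −ū_r)` for `i = r`, where `ū_i = u_1+⋯+u_i`. -/
def fayArgs (r i : ℕ) : Fin r → MPoly r := fun m =>
  if m.val + 1 < i then Xn r (m.val + 1)
  else if m.val + 1 = i then -(sumXn r i)
  else if m.val = i then sumXn r (i + 1)
  else Xn r m.val

/-- The Fay operator:
`ℱ(B)(u_1,…,u_r) = B(u_1,…,u_r) + B(u_2,…,u_r,−ū_r) + Σ_{i=1}^{r−1} B(u_2,…,u_i,−ū_i,ū_{i+1},u_{i+2},…,u_r)`. -/
def Fay (A : Mould) : Mould := fun r =>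
  A r + ∑ i ∈ Finset.Icc 1 r, msubst (fayArgs r i) (A r)

/-! ### Shuffles, alternality, push-invariance and circ-neutrality -/

/-- Arguments realizing the shuffle of `(u_1,…,u_k)` and `(u_{k+1},…,u_r)` whose
set of positions for the first word is `S` (with `S.card = k`). -/
def shuffleArgs (r : ℕ) (S : Finset (Fin r)) : Fin r → MPoly r := fun m =>
  if m ∈ S then Xn r ((S.filter (fun x => x < m)).card)
  else Xn r (S.card + ((Sᶜ.filter (fun x => x < m)).card))

/-- A mould is alternal if all its shuffle sums
`A(sh((u_1,…,u_k),(u_{k+1},…,u_r)))` for `1 ≤ k ≤ r−1` vanish. -/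
def Alternal (A : Mould) : Prop :=
  ∀ r k : ℕ, 1 ≤ k → k < r →
    ∑ S ∈ Finset.powersetCard k (Finset.univ : Finset (Fin r)),
      msubst (shuffleArgs r S) (A r) = 0

/-- A mould is push-invariant if `push_u A = A` in every depth `r ≥ 1`. -/
def PushInvariant (A : Mould) : Prop := ∀ r : ℕ, 1 ≤ r → pushU A r = A r

/-- Arguments of the `i`-th term (`1 ≤ i ≤ r`) of the shuffle sum
`B(sh((v_1),(v_2,…,v_r)))`, namely `(v_2,…,v_i, v_1, v_{i+1},…,v_r)`. -/
def sh1Args (r i : ℕ) : Fin r → MPoly r := fun m =>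
  if m.val + 1 < i then Xn r (m.val + 1)
  else if m.val + 1 = i then Xn r 0
  else Xn r m.val

/-! ### Mould multiplication, `arat`, and exponentials -/

/-- Arguments `(u_{a+1}, …, u_{a+s})` (a consecutive segment of variables). -/
def segArgs (r a : ℕ) {s : ℕ} : Fin s → MPoly r := fun m => Xn r (a + m.val)

/-- Arguments `(u_1,…,u_{a−1}, u_a+⋯+u_b, u_{b+1},…,u_r)` (the block `u_a…u_b`
merged into a single sum), of length `s = r − (b − a)`. -/
def mergeArgs (r a b : ℕ) {s : ℕ} : Fin s → MPoly r := fun m =>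
  if m.val + 1 < a then Xn r m.val
  else if m.val + 1 = a then ∑ k ∈ Finset.Icc (a - 1) (b - 1), Xn r k
  else Xn r (b + m.val - a)

/-- The mould `arat(M)·Q`. -/
def arat (M Q : Mould) : Mould := fun r =>
  (∑ i ∈ Finset.Icc 1 (r - 1), ∑ j ∈ Finset.Icc (i + 1) (r - 1),
      msubst (segArgs r i) (M (j - i)) *
        (msubst (mergeArgs r i j) (Q (r - (j - i))) -
          msubst (mergeArgs r (i + 1) (j + 1)) (Q (r - (j - i)))))
  + (∑ i ∈ Finset.Icc 1 (r - 1),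
      msubst (segArgs r 0) (M i) *
        (msubst (segArgs r i) (Q (r - i)) - msubst (mergeArgs r 1 (i + 1)) (Q (r - i))))
  + (∑ i ∈ Finset.Icc 1 (r - 1),
      msubst (segArgs r i) (M (r - i)) *
        (msubst (mergeArgs r i r) (Q i) - msubst (segArgs r 0) (Q i)))

/-- Mould multiplication `mu(A,B)(u_1,…,u_r) = Σ_i A(u_1,…,u_i)B(u_{i+1},…,u_r)`. -/
def muM (A B : Mould) : Mould := fun r =>
  ∑ i ∈ Finset.range (r + 1), msubst (segArgs r 0) (A i) * msubst (segArgs r i) (B (r - i))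

/-- The unit mould for `mu`. -/
def oneMould : Mould := fun r => if r = 0 then 1 else 0

/-- `mu`-powers of a mould. -/
def muPow (Q : Mould) : ℕ → Mould
  | 0 => oneMould
  | n + 1 => muM (muPow Q n) Q

/-- `exp_mu(Q) = Σ_{n≥0} Q^{·n}/n!`; for `Q ∈ ARI` this is a finite sum in each
depth, since `Q^{·n}` vanishes in depths `< n`. -/
def expMu (Q : Mould) : Mould := fun r =>
  ∑ n ∈ Finset.range (r + 1), constF r (1 / (n.factorial : ℚ)) * muPow Q n r

/-- A polynomial mould: each depth-`r` part is (the image of) a polynomial. -/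
def IsPolynomialMould (A : Mould) : Prop :=
  ∀ r : ℕ, A r ∈ Set.range (algebraMap (MPoly r) (MFrac r))

/-- Condition (a): `M := Δ⁻¹F` has `swap M + C` circ-neutral. -/
def CondA (A : Mould) (C : ℕ → ℚ) : Prop :=
  ∀ r : ℕ, 2 ≤ r →
    ∑ i ∈ Finset.range r, (circM^[i] (swapM (deltaInv A))) r
      = constF r (-(r : ℚ) * C r)

/-- Condition (b): the corrected Fay relations for `dar⁻¹F` with constants `C`. -/
def CondB (A : Mould) (C : ℕ → ℚ) : Prop :=
  ∀ r : ℕ, 2 ≤ r →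
    Fay (darInv A) r = constF r (-(r : ℚ) * C r) * toF (sumXn r r - Xn r 0)

/-!
Write `M = Δ⁻¹F`, so that `dar⁻¹F = (u_1 + ⋯ + u_r)·M`. Push-invariance says that
`M(a_1, …, a_r)` only depends on the cyclic word `(a_0, a_1, …, a_r)`, `a_0 = -(a_1 + ⋯ + a_r)`:
any `r` consecutive letters of it may serve as the arguments. After the change of variables
`v_{m+1} = u_1 + ⋯ + u_{r-m}` that undoes `swap`, the arguments of `circ^i (swap M)` and those of
the Fay term `M(u_2, …, u_j, -ū_j, ū_{j+1}, u_{j+2}, …, u_r)`, `j = r - i`, are consecutive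
letters of one cyclic word. So the circ-sum becomes `G = Σ_{j=1}^r` (Fay term `j` of `M`).
The arguments of the Fay term `j` add up to `u_2 + ⋯ + u_r` for `j < r` and to `-u_1` for
`j = r`, hence `ℱ(dar⁻¹F) = (u_2 + ⋯ + u_r)·G`, and both conditions say `G = -r·c_r`.
-/

open MvPolynomial Finset Fin.NatCast

variable {q s r : ℕ}

section General

lemma Nat.mod_eq_sub_of_le_of_lt_two_mul {a n : ℕ} (h₁ : n ≤ a) (h₂ : a < 2 * n) :
    a % n = a - n := by
  rw [Nat.mod_eq_sub_mod h₁, Nat.mod_eq_of_lt (by omega)]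

lemma Fin.exists_eq_neg_natCast (t : Fin (r + 1)) : ∃ n : ℕ, t = -(n : Fin (r + 1)) :=
  ⟨(-t).val, by rw [Fin.cast_val_eq_self, neg_neg]⟩

lemma sum_Icc_one_eq_sum_range_sub {M : Type*} [AddCommMonoid M] (f : ℕ → M) :
    ∑ j ∈ Icc 1 r, f j = ∑ i ∈ range r, f (r - i) := by
  rw [range_eq_Ico, sum_Ico_reflect _ _ (Nat.le_succ r), Nat.add_sub_cancel_left, Nat.sub_zero,
    Ico_add_one_right_eq_Icc]

end General

section Substitution

abbrev SubstInjective (ℓ : Fin s → MPoly r) : Prop := Function.Injective (aeval (R := ℚ) ℓ)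

lemma SubstInjective.toFrac {ℓ : Fin s → MPoly r} (h : SubstInjective ℓ) :
    Function.Injective ((algebraMap (MPoly r) (MFrac r)).comp (aeval (R := ℚ) ℓ).toRingHom) :=
  (IsFractionRing.injective (MPoly r) (MFrac r)).comp h

lemma SubstInjective.of_leftInverse {ℓ : Fin s → MPoly r} (τ : Fin r → MPoly s)
    (hτ : ∀ m, aeval (R := ℚ) τ (ℓ m) = X m) : SubstInjective ℓ := by
  have hid : (aeval (R := ℚ) τ).comp (aeval ℓ) = AlgHom.id ℚ (MPoly s) :=
    algHom_ext fun m => by rw [AlgHom.comp_apply, aeval_X, hτ, AlgHom.id_apply]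
  exact Function.LeftInverse.injective fun p => by simpa using DFunLike.congr_fun hid p

lemma SubstInjective.subst {g : Fin q → MPoly s} {ℓ : Fin s → MPoly r}
    (hg : SubstInjective g) (hℓ : SubstInjective ℓ) :
    SubstInjective (fun m => aeval (R := ℚ) ℓ (g m)) := by
  rw [SubstInjective, ← comp_aeval]
  exact hℓ.comp hg

lemma msubst_eq_lift {ℓ : Fin s → MPoly r} (h : SubstInjective ℓ) :
    msubst ℓ = IsFractionRing.lift h.toFrac := by
  funext A
  rw [msubst, dif_pos h.toFrac]

lemma msubst_injective {ℓ : Fin s → MPoly r} (h : SubstInjective ℓ) :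
    Function.Injective (msubst ℓ) := by
  rw [msubst_eq_lift h]
  exact RingHom.injective _

lemma msubst_toF {ℓ : Fin s → MPoly r} (h : SubstInjective ℓ) (p : MPoly s) :
    msubst ℓ (toF p) = toF (aeval (R := ℚ) ℓ p) := by
  rw [msubst_eq_lift h, toF, IsFractionRing.lift_algebraMap]
  rfl

lemma msubst_constF {ℓ : Fin s → MPoly r} (h : SubstInjective ℓ) (c : ℚ) :
    msubst ℓ (constF s c) = constF r c := by
  rw [constF, msubst_toF h, aeval_C]
  rfl

lemma msubst_mul {ℓ : Fin s → MPoly r} (h : SubstInjective ℓ) (a b : MFrac s) :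
    msubst ℓ (a * b) = msubst ℓ a * msubst ℓ b := by
  rw [msubst_eq_lift h, map_mul]

lemma msubst_sum {ℓ : Fin s → MPoly r} (h : SubstInjective ℓ) {ι : Type*} (t : Finset ι)
    (f : ι → MFrac s) : msubst ℓ (∑ i ∈ t, f i) = ∑ i ∈ t, msubst ℓ (f i) := by
  rw [msubst_eq_lift h, map_sum]

lemma msubst_msubst {g : Fin q → MPoly s} {ℓ : Fin s → MPoly r}
    (hg : SubstInjective g) (hℓ : SubstInjective ℓ) (A : MFrac q) :
    msubst ℓ (msubst g A) = msubst (fun m => aeval (R := ℚ) ℓ (g m)) A := by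
  obtain ⟨x, y, -, rfl⟩ := IsFractionRing.div_surjective (A := MPoly q) A
  simp only [msubst_eq_lift, hg, hℓ, hg.subst hℓ, map_div₀, IsFractionRing.lift_algebraMap,
    RingHom.coe_comp, Function.comp_apply, AlgHom.toRingHom_eq_coe, RingHom.coe_coe,
    comp_aeval_apply]

lemma msubst_X (A : MFrac r) : msubst (fun m : Fin r => (X m : MPoly r)) A = A := by
  have h : SubstInjective (fun m : Fin r => (X m : MPoly r)) := by
    simpa [SubstInjective, aeval_X_left] using Function.injective_id
  obtain ⟨x, y, -, rfl⟩ := IsFractionRing.div_surjective (A := MPoly r) A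
  simp [msubst_eq_lift h, IsFractionRing.lift_algebraMap]

end Substitution

section LinearForms

lemma Xn_of_le {k : ℕ} (h : r ≤ k) : Xn r k = 0 := dif_neg (by omega)

lemma Xn_val (m : Fin r) : Xn r m = X m := dif_pos m.isLt

lemma aeval_Xn (ℓ : Fin s → MPoly r) {k : ℕ} (h : k < s) :
    aeval (R := ℚ) ℓ (Xn s k) = ℓ ⟨k, h⟩ := by
  rw [Xn, dif_pos h, aeval_X]

lemma sumXn_succ (n : ℕ) : sumXn r (n + 1) = sumXn r n + Xn r n := sum_range_succ _ n

lemma sumXn_one : sumXn r 1 = Xn r 0 := by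
  simp [sumXn]

lemma Xn_eq_sumXn_sub (k : ℕ) : Xn r k = sumXn r (k + 1) - sumXn r k := by
  rw [sumXn_succ, add_sub_cancel_left]

lemma aeval_sumXn_self (ℓ : Fin r → MPoly r) :
    aeval (R := ℚ) ℓ (sumXn r r) = ∑ k, ℓ k := by
  rw [sumXn, map_sum, ← Fin.sum_univ_eq_sum_range]
  exact sum_congr rfl fun k _ => aeval_Xn ℓ k.isLt

lemma eval_one_Xn {k : ℕ} (hk : k < r) : eval (fun _ => (1 : ℚ)) (Xn r k) = 1 := by
  rw [Xn, dif_pos hk, eval_X]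

lemma eval_one_sumXn_self : eval (fun _ => (1 : ℚ)) (sumXn r r) = r := by
  rw [sumXn, map_sum, sum_congr rfl fun k hk => eval_one_Xn (mem_range.mp hk)]
  simp

lemma toF_ne_zero {p : MPoly r} (hp : p ≠ 0) : toF p ≠ 0 :=
  (map_ne_zero_iff _ (IsFractionRing.injective (MPoly r) (MFrac r))).mpr hp

lemma sumXn_self_ne_zero (hr : 1 ≤ r) : sumXn r r ≠ 0 := fun h => by
  have := congrArg (eval fun _ => (1 : ℚ)) h
  rw [eval_one_sumXn_self, map_zero] at this
  norm_cast at this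
  omega

lemma sumXn_self_sub_Xn_zero_ne_zero (hr : 2 ≤ r) : sumXn r r - Xn r 0 ≠ 0 := fun h => by
  have := congrArg (eval fun _ => (1 : ℚ)) h
  rw [map_sub, eval_one_sumXn_self, eval_one_Xn (by omega), map_zero, sub_eq_zero] at this
  norm_cast at this
  omega

end LinearForms

section Swap

/-- The change of variables `v_{m+1} = u_1 + ⋯ + u_{r-m}` inverting the one in `swap`. -/
def unswapArgs (r : ℕ) : Fin r → MPoly r := fun m => sumXn r (r - m)

lemma aeval_unswapArgs_swapArgs (m : Fin r) :
    aeval (R := ℚ) (unswapArgs r) (swapArgs r m) = X m := by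
  have hlast : aeval (R := ℚ) (unswapArgs r) (Xn r (r - m)) = sumXn r m := by
    rcases Nat.eq_zero_or_pos m.val with h | h
    · simp [h, Xn_of_le, sumXn]
    · rw [aeval_Xn _ (by omega), unswapArgs]
      congr 1
      dsimp only
      omega
  rw [swapArgs, map_sub, hlast, aeval_Xn _ (by omega), unswapArgs, ← Xn_val]
  dsimp only
  rw [show r - (r - 1 - m) = m + 1 by omega, ← Xn_eq_sumXn_sub]

lemma aeval_swapArgs_unswapArgs (m : Fin r) :
    aeval (R := ℚ) (swapArgs r) (unswapArgs r m) = X m := by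
  have hterm : ∀ k ∈ range (r - m), aeval (R := ℚ) (swapArgs r) (Xn r k)
      = Xn r (r - (k + 1)) - Xn r (r - k) := fun k hk => by
    rw [aeval_Xn _ (by have := mem_range.mp hk; omega), swapArgs]
    dsimp only
    congr 2
    omega
  rw [unswapArgs, sumXn, map_sum, sum_congr rfl hterm, sum_range_sub (fun k => Xn r (r - k)),
    Nat.sub_sub_self m.isLt.le, Nat.sub_zero, Xn_of_le le_rfl, sub_zero, Xn_val]

lemma sum_swapArgs : ∑ m, swapArgs r m = Xn r 0 := by
  calc ∑ m, swapArgs r m = ∑ m ∈ range r, (Xn r (r - (m + 1)) - Xn r (r - m)) := by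
        rw [← Fin.sum_univ_eq_sum_range (fun m => Xn r (r - (m + 1)) - Xn r (r - m))]
        exact sum_congr rfl fun m _ => by rw [swapArgs, Nat.sub_sub, Nat.add_comm]
    _ = Xn r 0 := by rw [sum_range_sub (fun k => Xn r (r - k)), Nat.sub_self, Nat.sub_zero,
        Xn_of_le le_rfl, sub_zero]

lemma substInjective_swapArgs : SubstInjective (swapArgs r) :=
  .of_leftInverse _ aeval_unswapArgs_swapArgs

lemma substInjective_unswapArgs : SubstInjective (unswapArgs r) :=
  .of_leftInverse _ aeval_swapArgs_unswapArgs

end Swap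

section Circ

def circPowArgs (r i : ℕ) : Fin r → MPoly r := fun m => Xn r ((m + i) % r)

lemma circPowArgs_zero : circPowArgs r 0 = fun m => X m :=
  funext fun m => by rw [circPowArgs, Nat.add_zero, Nat.mod_eq_of_lt m.isLt, Xn_val]

lemma circArgs_eq_circPowArgs_one : circArgs r = circPowArgs r 1 := by
  funext m
  rw [circArgs, circPowArgs]
  split_ifs with h
  · rw [h, Nat.sub_add_cancel (by omega), Nat.mod_self]
  · rw [Nat.mod_eq_of_lt (by omega)]

lemma aeval_circPowArgs_circPowArgs (a b : ℕ) (m : Fin r) :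
    aeval (R := ℚ) (circPowArgs r a) (circPowArgs r b m) = circPowArgs r (b + a) m := by
  rw [circPowArgs, aeval_Xn _ (Nat.mod_lt _ m.pos), circPowArgs, circPowArgs, Nat.mod_add_mod,
    Nat.add_assoc]

lemma substInjective_circPowArgs (i : ℕ) : SubstInjective (circPowArgs r i) := by
  refine .of_leftInverse (circPowArgs r (r * i - i)) fun m => ?_
  rw [aeval_circPowArgs_circPowArgs, Nat.add_sub_cancel' (Nat.le_mul_of_pos_left i m.pos),
    circPowArgs, Nat.add_mul_mod_self_left, Nat.mod_eq_of_lt m.isLt, Xn_val]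

lemma circM_iterate_apply (B : Mould) (i : ℕ) :
    (circM^[i] B) r = msubst (circPowArgs r i) (B r) := by
  induction i with
  | zero => rw [Function.iterate_zero_apply, circPowArgs_zero, msubst_X]
  | succ i ih =>
    rw [Function.iterate_succ_apply', circM, ih, circArgs_eq_circPowArgs_one,
      msubst_msubst (substInjective_circPowArgs i) (substInjective_circPowArgs 1)]
    exact congrArg (msubst · (B r)) (funext (aeval_circPowArgs_circPowArgs 1 i))

end Circ

section CyclicWord

/-- The word `ℓ` closed up, by the letter `-(ℓ_0 + ⋯ + ℓ_{r-1})` in position `0`, to a cyclic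
word of length `r + 1` with sum zero. -/
def cyclicWord (ℓ : Fin r → MPoly r) (p : Fin (r + 1)) : MPoly r :=
  if h : p.val = 0 then -∑ k, ℓ k else ℓ ⟨p.val - 1, by omega⟩

def rotateWord (ℓ : Fin r → MPoly r) (t : Fin (r + 1)) : Fin r → MPoly r :=
  fun m => cyclicWord ℓ (m.succ + t)

variable (ℓ : Fin r → MPoly r)

lemma cyclicWord_of_val_eq_zero {p : Fin (r + 1)} (hp : p.val = 0) :
    cyclicWord ℓ p = -∑ k, ℓ k :=
  dif_pos hp

lemma cyclicWord_of_val_eq_succ {p : Fin (r + 1)} {k : ℕ} (hp : p.val = k + 1) :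
    cyclicWord ℓ p = ℓ ⟨k, by omega⟩ := by
  rw [cyclicWord, dif_neg (by omega)]
  simp only [hp, Nat.add_sub_cancel]

lemma cyclicWord_succ (m : Fin r) : cyclicWord ℓ m.succ = ℓ m :=
  cyclicWord_of_val_eq_succ ℓ (Fin.val_succ m)

lemma rotateWord_zero : rotateWord ℓ 0 = ℓ :=
  funext fun m => by rw [rotateWord, add_zero, cyclicWord_succ]

lemma sum_cyclicWord : ∑ p, cyclicWord ℓ p = 0 := by
  simp [Fin.sum_univ_succ, cyclicWord]

lemma sum_rotateWord (t : Fin (r + 1)) : ∑ m, rotateWord ℓ t m = -cyclicWord ℓ t := by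
  have h : ∑ p, cyclicWord ℓ (p + t) = 0 :=
    (Fintype.sum_equiv (Equiv.addRight t) _ _ fun _ => rfl).trans (sum_cyclicWord ℓ)
  rw [Fin.sum_univ_succ, zero_add] at h
  exact eq_neg_of_add_eq_zero_right h

lemma aeval_rotateWord_pushArgs (t : Fin (r + 1)) (m : Fin r) :
    aeval (R := ℚ) (rotateWord ℓ t) (pushArgs r m) = rotateWord ℓ (t - 1) m := by
  rw [pushArgs, rotateWord]
  split_ifs with h
  · have h1 : m.succ = 1 := Fin.ext (by simp [h, Nat.mod_eq_of_lt, m.pos])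
    rw [map_neg, aeval_sumXn_self, sum_rotateWord, neg_neg, h1, add_sub_cancel]
  · have h1 : (⟨m.val - 1, by omega⟩ : Fin r).succ = m.castSucc :=
      Fin.ext (by simp only [Fin.val_succ, Fin.val_castSucc]; omega)
    rw [aeval_Xn _ (by omega), rotateWord, h1, ← Fin.coeSucc_eq_succ, add_add_sub_cancel]

lemma substInjective_pushArgs : SubstInjective (pushArgs r) :=
  .of_leftInverse (rotateWord (fun m => X m) 1) fun m => by
    rw [aeval_rotateWord_pushArgs, sub_self, rotateWord_zero]

variable {ℓ} (hℓ : SubstInjective ℓ)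
include hℓ

lemma substInjective_rotateWord (t : Fin (r + 1)) : SubstInjective (rotateWord ℓ t) := by
  obtain ⟨n, rfl⟩ := Fin.exists_eq_neg_natCast t
  induction n with
  | zero => rwa [Nat.cast_zero, neg_zero, rotateWord_zero]
  | succ n ih =>
    rw [Nat.cast_succ, neg_add, ← sub_eq_add_neg, ← funext (aeval_rotateWord_pushArgs ℓ _)]
    exact substInjective_pushArgs.subst ih

lemma msubst_rotateWord {M : MFrac r} (hM : msubst (pushArgs r) M = M) (t : Fin (r + 1)) :
    msubst (rotateWord ℓ t) M = msubst ℓ M := by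
  obtain ⟨n, rfl⟩ := Fin.exists_eq_neg_natCast t
  induction n with
  | zero => rw [Nat.cast_zero, neg_zero, rotateWord_zero]
  | succ n ih =>
    rw [Nat.cast_succ, neg_add, ← sub_eq_add_neg, ← funext (aeval_rotateWord_pushArgs ℓ _),
      ← msubst_msubst substInjective_pushArgs (substInjective_rotateWord hℓ _), hM, ih]

end CyclicWord

section CircSwap

/-- `msubst (circSwapArgs r i) M` is `(circ^i (swap M))(v)` rewritten in the variables `u`
of `M`, where `v_{m+1} = u_1 + ⋯ + u_{r-m}`. -/
def circSwapArgs (r i : ℕ) : Fin r → MPoly r :=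
  fun m => aeval (R := ℚ) (unswapArgs r) (aeval (R := ℚ) (circPowArgs r i) (swapArgs r m))

lemma substInjective_circSwapArgs (i : ℕ) : SubstInjective (circSwapArgs r i) :=
  (substInjective_swapArgs.subst (substInjective_circPowArgs i)).subst substInjective_unswapArgs

lemma circSwapArgs_zero : circSwapArgs r 0 = fun m => X m :=
  funext fun m => by
    rw [circSwapArgs, circPowArgs_zero, aeval_X_left_apply, aeval_unswapArgs_swapArgs]

lemma aeval_unswapArgs_circPowArgs_Xn (i : ℕ) {k : ℕ} (hk : k < r) :
    aeval (R := ℚ) (unswapArgs r) (aeval (R := ℚ) (circPowArgs r i) (Xn r k))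
      = sumXn r (r - (k + i) % r) := by
  rw [aeval_Xn _ hk, circPowArgs, aeval_Xn _ (Nat.mod_lt _ (by omega)), unswapArgs]

lemma circSwapArgs_apply (i : ℕ) (m : Fin r) :
    circSwapArgs r i m = sumXn r (r - (r - 1 - m + i) % r)
      - if m.val = 0 then 0 else sumXn r (r - (r - m + i) % r) := by
  rw [circSwapArgs, swapArgs, map_sub, map_sub, aeval_unswapArgs_circPowArgs_Xn i (by omega)]
  split_ifs with h
  · simp [h, Xn_of_le]
  · rw [aeval_unswapArgs_circPowArgs_Xn i (by omega)]

lemma sum_circSwapArgs {i : ℕ} (hi : i < r) : ∑ m, circSwapArgs r i m = sumXn r (r - i) := by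
  simp only [circSwapArgs]
  rw [← map_sum, ← map_sum, sum_swapArgs, aeval_unswapArgs_circPowArgs_Xn i (by omega), zero_add,
    Nat.mod_eq_of_lt hi]

lemma rotateWord_circSwapArgs {i : ℕ} (hi : i < r) :
    rotateWord (circSwapArgs r i) ((i + 1 : ℕ) : Fin (r + 1)) = fayArgs r (r - i) := by
  funext m
  have hval : (m.succ + ((i + 1 : ℕ) : Fin (r + 1))).val = (m + i + 2) % (r + 1) := by
    rw [Fin.val_add, Fin.val_succ, Fin.val_natCast, Nat.add_mod_mod]
    congr 1
    omega
  rw [rotateWord, fayArgs]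
  rcases lt_trichotomy (m + i + 2) (r + 1) with h | h | h
  · rw [cyclicWord_of_val_eq_succ _ (k := m + i + 1) (by rw [hval, Nat.mod_eq_of_lt h]),
      circSwapArgs_apply, if_neg (by simp), if_pos (show m.val + 1 < r - i by omega),
      Xn_eq_sumXn_sub]
    dsimp only
    rw [Nat.mod_eq_of_lt (by omega), Nat.mod_eq_of_lt (by omega)]
    congr 2 <;> omega
  · rw [cyclicWord_of_val_eq_zero _ (by rw [hval, h, Nat.mod_self]), sum_circSwapArgs hi,
      if_neg (show ¬ m.val + 1 < r - i by omega), if_pos (show m.val + 1 = r - i by omega)]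
  · rw [cyclicWord_of_val_eq_succ _ (k := m + i - r)
        (by rw [hval, Nat.mod_eq_sub_of_le_of_lt_two_mul (by omega) (by omega)]; omega),
      circSwapArgs_apply, if_neg (show ¬ m.val + 1 < r - i by omega),
      if_neg (show ¬ m.val + 1 = r - i by omega)]
    dsimp only
    rw [Nat.mod_eq_sub_of_le_of_lt_two_mul (by omega) (by omega)]
    by_cases hm : m.val + i = r
    · rw [if_pos (show m.val + i - r = 0 by omega), sub_zero,
        if_pos (show m.val = r - i by omega)]
      congr 1
      omega
    · rw [if_neg (show ¬ m.val + i - r = 0 by omega), if_neg (show ¬ m.val = r - i by omega),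
        Nat.mod_eq_sub_of_le_of_lt_two_mul (by omega) (by omega), Xn_eq_sumXn_sub]
      congr 2 <;> omega

end CircSwap

section FayArgs

variable {i : ℕ} (hi : i < r)
include hi

lemma substInjective_fayArgs : SubstInjective (fayArgs r (r - i)) := by
  rw [← rotateWord_circSwapArgs hi]
  exact substInjective_rotateWord (substInjective_circSwapArgs i) _

lemma msubst_fayArgs {M : MFrac r} (hM : msubst (pushArgs r) M = M) :
    msubst (fayArgs r (r - i)) M = msubst (circSwapArgs r i) M := by
  rw [← rotateWord_circSwapArgs hi, msubst_rotateWord (substInjective_circSwapArgs i) hM]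

lemma sum_fayArgs :
    ∑ k, fayArgs r (r - i) k = (if i = 0 then 0 else sumXn r r) - Xn r 0 := by
  rw [← rotateWord_circSwapArgs hi, sum_rotateWord,
    cyclicWord_of_val_eq_succ _ (k := i) (by rw [Fin.val_natCast, Nat.mod_eq_of_lt (by omega)]),
    circSwapArgs_apply]
  dsimp only
  rw [show r - 1 - i + i = r - 1 by omega, Nat.mod_eq_of_lt (by omega),
    show r - (r - 1) = 1 by omega, sumXn_one, Nat.sub_add_cancel hi.le, Nat.mod_self,
    Nat.sub_zero, neg_sub]

end FayArgs

lemma fay_sumXn_mul {M : MFrac r} (hM : msubst (pushArgs r) M = M) (hr : 1 ≤ r) :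
    toF (sumXn r r) * M + ∑ j ∈ Icc 1 r, msubst (fayArgs r j) (toF (sumXn r r) * M)
      = toF (sumXn r r - Xn r 0) * ∑ i ∈ range r, msubst (circSwapArgs r i) M := by
  have hterm : ∀ i ∈ range r, msubst (fayArgs r (r - i)) (toF (sumXn r r) * M)
      = toF ((if i = 0 then 0 else sumXn r r) - Xn r 0) * msubst (circSwapArgs r i) M :=
    fun i hi => by
      have hi := mem_range.mp hi
      rw [msubst_mul (substInjective_fayArgs hi), msubst_toF (substInjective_fayArgs hi),
        aeval_sumXn_self, sum_fayArgs hi, msubst_fayArgs hi hM]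
  obtain ⟨r, rfl⟩ : ∃ r', r = r' + 1 := ⟨r - 1, by omega⟩
  rw [sum_Icc_one_eq_sum_range_sub, sum_congr rfl hterm, sum_range_succ', sum_range_succ',
    circSwapArgs_zero, msubst_X, if_pos rfl]
  simp only [Nat.succ_ne_zero, if_false, toF, map_sub, map_zero, mul_add, ← mul_sum]
  ring

lemma darInv_eq_mul_deltaInv (A : Mould) (hr : 1 ≤ r) :
    darInv A r = toF (sumXn r r) * deltaInv A r := by
  simp only [darInv, deltaInv, toF, map_mul]
  rw [← div_div]
  exact (mul_div_cancel₀ _ (toF_ne_zero (sumXn_self_ne_zero hr))).symm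

lemma msubst_unswapArgs_sum_circM_swapM (B : Mould) :
    msubst (unswapArgs r) (∑ i ∈ range r, (circM^[i] (swapM B)) r)
      = ∑ i ∈ range r, msubst (circSwapArgs r i) (B r) := by
  rw [msubst_sum substInjective_unswapArgs]
  refine sum_congr rfl fun i _ => ?_
  rw [circM_iterate_apply, swapM,
    msubst_msubst substInjective_swapArgs (substInjective_circPowArgs i),
    msubst_msubst (substInjective_swapArgs.subst (substInjective_circPowArgs i))
      substInjective_unswapArgs]
  rfl

lemma circ_sum_eq_constF_iff_fay_eq {A : Mould} (hP : PushInvariant (deltaInv A)) (hr : 2 ≤ r)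
    (c : ℚ) :
    ∑ i ∈ range r, (circM^[i] (swapM (deltaInv A))) r = constF r c ↔
      Fay (darInv A) r = constF r c * toF (sumXn r r - Xn r 0) := by
  have hA : ∑ i ∈ range r, (circM^[i] (swapM (deltaInv A))) r = constF r c ↔
      ∑ i ∈ range r, msubst (circSwapArgs r i) (deltaInv A r) = constF r c := by
    rw [← (msubst_injective substInjective_unswapArgs).eq_iff,
      msubst_unswapArgs_sum_circM_swapM, msubst_constF substInjective_unswapArgs]
  have hB : Fay (darInv A) r
      = toF (sumXn r r - Xn r 0) * ∑ i ∈ range r, msubst (circSwapArgs r i) (deltaInv A r) := by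
    rw [Fay, darInv_eq_mul_deltaInv A (by omega)]
    exact fay_sumXn_mul (hP r (by omega)) (by omega)
  rw [hA, hB, mul_comm (constF r c),
    mul_right_inj' (toF_ne_zero (sumXn_self_sub_Xn_zero_ne_zero hr))]

lemma condA_iff_condB {A : Mould} (hP : PushInvariant (deltaInv A)) (C : ℕ → ℚ) :
    CondA A C ↔ CondB A C :=
  forall₂_congr fun _ hr => circ_sum_eq_constF_iff_fay_eq hP hr _

/-- **Corollary of Theorem 1.3 (Theorem A).** The set of polynomial moulds
`F ∈ ARI` such that `M := Δ⁻¹F` is alternal and push-invariant and `swap M + C`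
is circ-neutral for some constant mould `C` (the defining conditions of
`krv_ell`) coincides with the set of polynomial moulds `F ∈ ARI` such that
`M := Δ⁻¹F` is alternal and push-invariant and
`ℱ(dar⁻¹F)(u_1,…,u_r) = −r·c_r·(u_2+⋯+u_r)` for all `r ≥ 2`, for some constant
mould `C`; moreover for a given `F` the same constant mould `C` works in both. -/
theorem corollary_of_theorem_1_3 :
    (∀ A : Mould, A 0 = 0 → IsPolynomialMould A →
      ((Alternal (deltaInv A) ∧ PushInvariant (deltaInv A) ∧ ∃ C : ℕ → ℚ, CondA A C) ↔
        (Alternal (deltaInv A) ∧ PushInvariant (deltaInv A) ∧ ∃ C : ℕ → ℚ, CondB A C))) ∧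
    (∀ A : Mould, A 0 = 0 → IsPolynomialMould A → ∀ C : ℕ → ℚ,
      ((Alternal (deltaInv A) ∧ PushInvariant (deltaInv A) ∧ CondA A C) ↔
        (Alternal (deltaInv A) ∧ PushInvariant (deltaInv A) ∧ CondB A C))) :=
  ⟨fun _ _ _ => and_congr_right fun _ => and_congr_right fun hP =>
      exists_congr (condA_iff_condB hP),
    fun _ _ _ C => and_congr_right fun _ => and_congr_right fun hP => condA_iff_condB hP C⟩

end
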